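/- arXiv:2401.09641 — 2 statements merged into one kernel-verified Lean document; each statement's English description precedes it below -/
import Mathlib

section
/- Let e₁ and e₂ be independent real-valued random variables on a probability space with laws gaussianReal 0 σ₁² and gaussianReal 0 σ₂² respectively, let a ∈ ℝ, and assume a²σ₁² + σ₂² > 0. Set X₁ = e₁, X₂ = a·X₁ + e₂, and a' = aσ₁² / (a²σ₁² + σ₂²). Then X₂ and the residual e₂' := X₁ − a'·X₂ are independent. -/
open MeasureTheory ProbabilityTheory
open scoped NNReal

/-! The pair `(X₁, X₂)` is a linear image of the independent Gaussian pair `(e₁, e₂)`, hence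
jointly Gaussian, and for jointly Gaussian variables uncorrelated means independent.
The coefficient `a'` is the regression coefficient `cov(X₁, X₂) / Var X₂`, which is exactly
what makes the residual `X₁ - a' X₂` uncorrelated with `X₂`. -/

namespace ProbabilityTheory

variable {Ω : Type*} [MeasurableSpace Ω] {P : Measure Ω}

lemma hasLaw_of_map_eq {𝓧 : Type*} [MeasurableSpace 𝓧] {X : Ω → 𝓧} {μ : Measure 𝓧} [NeZero μ]
    (h : P.map X = μ) : HasLaw X μ P :=
  ⟨.of_map_ne_zero (h ▸ NeZero.ne μ), h⟩

lemma HasGaussianLaw.indepFun_sub_covariance_div_variance_mul {X Y : Ω → ℝ}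
    (hXY : HasGaussianLaw (fun ω ↦ (X ω, Y ω)) P) (hY : Var[Y; P] ≠ 0) :
    IndepFun Y (fun ω ↦ X ω - cov[X, Y; P] / Var[Y; P] * Y ω) P := by
  have := hXY.isProbabilityMeasure
  set c := cov[X, Y; P] / Var[Y; P]
  have hjoint : HasGaussianLaw (fun ω ↦ (Y ω, X ω - c * Y ω)) P := by
    simpa using hXY.map_fun ((ContinuousLinearMap.snd ℝ ℝ ℝ).prod
      (ContinuousLinearMap.fst ℝ ℝ ℝ - c • ContinuousLinearMap.snd ℝ ℝ ℝ))
  refine hjoint.indepFun_of_covariance_eq_zero ?_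
  rw [covariance_fun_sub_right hXY.snd.memLp_two hXY.fst.memLp_two
      (hXY.snd.memLp_two.const_mul c), covariance_const_mul_right,
    covariance_self hXY.snd.aemeasurable, covariance_comm, div_mul_cancel₀ _ hY, sub_self]

end ProbabilityTheory

theorem gaussian_reverse_model_independent_general
    {Ω : Type*} [MeasurableSpace Ω] (P : Measure Ω)
    (e₁ e₂ : Ω → ℝ)
    (hindep : IndepFun e₁ e₂ P)
    (v₁ v₂ : ℝ≥0)
    (hlaw₁ : Measure.map e₁ P = gaussianReal 0 v₁)
    (hlaw₂ : Measure.map e₂ P = gaussianReal 0 v₂)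
    (a : ℝ) (hpos : 0 < a ^ 2 * (v₁ : ℝ) + (v₂ : ℝ)) :
    IndepFun (fun ω => a * e₁ ω + e₂ ω)
      (fun ω => e₁ ω - (a * (v₁ : ℝ) / (a ^ 2 * (v₁ : ℝ) + (v₂ : ℝ))) *
        (a * e₁ ω + e₂ ω)) P := by
  have h₁ := hasLaw_of_map_eq hlaw₁
  have h₂ := hasLaw_of_map_eq hlaw₂
  have := h₁.isProbabilityMeasure
  have hnoise : HasGaussianLaw (fun ω ↦ (e₁ ω, e₂ ω)) P :=
    hindep.hasGaussianLaw h₁.hasGaussianLaw h₂.hasGaussianLaw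
  have hmodel : HasGaussianLaw (fun ω ↦ (e₁ ω, a * e₁ ω + e₂ ω)) P := by
    simpa using hnoise.map_fun ((ContinuousLinearMap.fst ℝ ℝ ℝ).prod
      (a • ContinuousLinearMap.fst ℝ ℝ ℝ + ContinuousLinearMap.snd ℝ ℝ ℝ))
  have hm₁ : MemLp e₁ 2 P := h₁.hasGaussianLaw.memLp_two
  have hm₂ : MemLp e₂ 2 P := h₂.hasGaussianLaw.memLp_two
  have hvar₁ : Var[e₁; P] = v₁ := by rw [h₁.variance_eq, variance_id_gaussianReal]
  have hvar₂ : Var[e₂; P] = v₂ := by rw [h₂.variance_eq, variance_id_gaussianReal]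
  have hcov : cov[e₁, fun ω ↦ a * e₁ ω + e₂ ω; P] = a * v₁ := by
    change cov[e₁, (fun ω ↦ a * e₁ ω) + e₂; P] = _
    rw [covariance_add_right hm₁ (hm₁.const_mul a) hm₂, covariance_const_mul_right,
      covariance_self h₁.aemeasurable, hindep.covariance_eq_zero hm₁ hm₂, hvar₁, add_zero]
  have hvar : Var[fun ω ↦ a * e₁ ω + e₂ ω; P] = a ^ 2 * v₁ + v₂ := by
    rw [← hvar₁, ← hvar₂, ← variance_const_mul]
    exact (hindep.comp (measurable_const_mul a) measurable_id).variance_add (hm₁.const_mul a) hm₂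
  simpa [hcov, hvar] using hmodel.indepFun_sub_covariance_div_variance_mul (hvar ▸ hpos.ne')

/-- **Non-identifiability of LiNGAM with Gaussian noise (two variables).**
If `e₁, e₂` are independent centered Gaussian noises, `X₁ = e₁` and
`X₂ = a X₁ + e₂`, then with `a' = a σ₁² / (a² σ₁² + σ₂²)` the reverse model holds:
`X₂` is independent of the residual `e₂' = X₁ - a' X₂`. -/
theorem gaussian_reverse_model_independent
    {Ω : Type*} [MeasurableSpace Ω] (P : Measure Ω) [IsProbabilityMeasure P]
    (e₁ e₂ : Ω → ℝ) (hme₁ : Measurable e₁) (hme₂ : Measurable e₂)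
    (hindep : IndepFun e₁ e₂ P)
    (v₁ v₂ : ℝ≥0)
    (hlaw₁ : Measure.map e₁ P = gaussianReal 0 v₁)
    (hlaw₂ : Measure.map e₂ P = gaussianReal 0 v₂)
    (a : ℝ) (hpos : 0 < a ^ 2 * (v₁ : ℝ) + (v₂ : ℝ)) :
    IndepFun (fun ω => a * e₁ ω + e₂ ω)
      (fun ω => e₁ ω - (a * (v₁ : ℝ) / (a ^ 2 * (v₁ : ℝ) + (v₂ : ℝ))) *
        (a * e₁ ω + e₂ ω)) P :=
  gaussian_reverse_model_independent_general P e₁ e₂ hindep v₁ v₂ hlaw₁ hlaw₂ a hpos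
end

section
/- Let S and K be real symmetric m×m matrices with S positive semidefinite and K positive definite, and let M be a real m×m matrix satisfying M(S + K) = S. Then every real eigenvalue λ of M satisfies 0 ≤ λ < 1. -/
/-!
Substituting `u = (S + K) w` turns the eigenvalue equation `M u = λ u` into the generalized
eigenvalue problem `S w = λ (S + K) w`. Pairing with `w` gives `a = λ (a + b)` with
`a = wᵀ S w ≥ 0` and `b = wᵀ K w > 0`, so `λ = a / (a + b) ∈ [0, 1)`.
-/

open Matrix

theorem nonneg_and_lt_one_of_eq_mul_add {a b l : ℝ} (ha : 0 ≤ a) (hb : 0 < b)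
    (h : a = l * (a + b)) : 0 ≤ l ∧ l < 1 := by
  have hab : 0 < a + b := by linarith
  constructor <;> nlinarith

namespace Matrix

variable {n : Type*} [Fintype n] {S K : Matrix n n ℝ}

theorem PosSemidef.generalizedEigenvalue_bound_of_posDef (hS : S.PosSemidef) (hK : K.PosDef)
    {l : ℝ} {w : n → ℝ} (hw : w ≠ 0) (h : S *ᵥ w = l • (S + K) *ᵥ w) :
    0 ≤ l ∧ l < 1 := by
  have ha : 0 ≤ w ⬝ᵥ S *ᵥ w := by simpa using hS.dotProduct_mulVec_nonneg w
  have hb : 0 < w ⬝ᵥ K *ᵥ w := by simpa using hK.dotProduct_mulVec_pos hw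
  refine nonneg_and_lt_one_of_eq_mul_add ha hb ?_
  rw [← dotProduct_add, ← add_mulVec, ← smul_eq_mul, ← dotProduct_smul, ← h]

end Matrix

/-- **Spectral bound for `M = S (S + K)⁻¹`.** If `S` is real symmetric
positive semidefinite, `K` is real symmetric positive definite, and
`M (S + K) = S`, then every real eigenvalue `λ` of `M` satisfies
`0 ≤ λ < 1`. -/
theorem eigenvalue_bound_of_psd_pd
    {m : ℕ} (S K M : Matrix (Fin m) (Fin m) ℝ)
    (hS : S.PosSemidef) (hK : K.PosDef)
    (hM : M * (S + K) = S) :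
    ∀ (l : ℝ) (u : Fin m → ℝ), u ≠ 0 → M.mulVec u = l • u → 0 ≤ l ∧ l < 1 := by
  intro l u hu hMu
  obtain ⟨w, rfl⟩ : ∃ w, (S + K) *ᵥ w = u :=
    mulVec_surjective_iff_isUnit.2 (PosDef.posSemidef_add hS hK).isUnit u
  have hw : w ≠ 0 := by
    rintro rfl
    exact hu (mulVec_zero _)
  refine hS.generalizedEigenvalue_bound_of_posDef hK hw ?_
  rw [← hMu, mulVec_mulVec, hM]
end
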